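/- arXiv:1210.3231 — 3 statements merged into one kernel-verified Lean document; each statement's English description precedes it below -/
import Mathlib

section
/- Let p be a nonzero homogeneous polynomial in d variables with real coefficients that is hyperbolic in direction u ∈ ℝ^d. Fix x ∈ ℝ^d with p(x) = 0, write p(x + y) = Σ_{j ≥ k} q_j(y) where each q_j is homogeneous of degree j in y and q_k is the nonzero homogeneous component of lowest degree (the localization of p at x). Then q_k is hyperbolic in direction u. -/
/-!
Write `q_k z = lim_{σ → 0} σ⁻ᵏ p (x + σ z)`, locally uniformly in `z ∈ ℂ^d`. Fix a real `a` and a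
real `v` with `q_k v ≠ 0`, so that `ζ ↦ q_k (a + i u + ζ v)` is a nonzero polynomial. For real
`σ ≠ 0` the point `x + σ (a + i u + ζ v)` has imaginary part `σ (u + (Im ζ) v)`, which for small
`|ζ|` is a direction in the hyperbolicity cone of `p`, because that cone is open. Hence the
approximants have no zeros in a small disc around `ζ = 0`, and by Hurwitz's theorem neither does
the limit: `q_k (a + i u) ≠ 0`.

Openness of the cone is Gårding's argument: as the direction moves from `u` to a nearby `b`,
the roots of `T ↦ p (a + i ε u + T b)` stay bounded and never cross the real axis, so they stay
in the lower half plane; then `ε → 0` by Hurwitz's theorem again.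
-/

open Complex MvPolynomial Metric Set Filter Topology
open scoped Polynomial

noncomputable section

namespace MvPolynomial

variable {ι R A : Type*} [CommSemiring R] [CommSemiring A] [Algebra R A]

@[fun_prop]
theorem continuous_aeval [TopologicalSpace A] [IsTopologicalSemiring A] (p : MvPolynomial ι R) :
    Continuous fun z : ι → A => aeval z p := by
  simpa only [eval_map, aeval_def] using continuous_eval (map (algebraMap R A) p)

theorem IsHomogeneous.aeval_smul {p : MvPolynomial ι R} {n : ℕ} (hp : p.IsHomogeneous n)
    (t : A) (z : ι → A) : MvPolynomial.aeval (t • z) p = t ^ n * MvPolynomial.aeval z p := by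
  rw [aeval_def, aeval_def, eval₂_eq, eval₂_eq, Finset.mul_sum]
  refine Finset.sum_congr rfl fun s hs => ?_
  have hdeg : ∑ i ∈ s.support, s i = n := by
    simpa [Finsupp.weight_apply, Finsupp.sum] using hp (mem_support_iff.mp hs)
  simp_rw [Pi.smul_apply, smul_eq_mul, mul_pow, Finset.prod_mul_distrib,
    Finset.prod_pow_eq_pow_sum, hdeg]
  ring

theorem aeval_ofReal (p : MvPolynomial ι ℝ) (a : ι → ℝ) :
    aeval (fun i => (a i : ℂ)) p = eval a p := by
  simpa [Function.comp_def] using aeval_algebraMap_apply (B := ℂ) a p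

theorem aeval_aeval_X_add_C (p : MvPolynomial ι R) (x : ι → R) (z : ι → A) :
    aeval z (aeval (fun i => X i + C (x i)) p) = aeval (fun i => algebraMap R A (x i) + z i) p := by
  rw [comp_aeval_apply]
  simp [add_comm]

def restrictLine (p : MvPolynomial ι ℝ) (w b : ι → ℂ) : ℂ[X] :=
  aeval (fun i => Polynomial.C (w i) + Polynomial.X * Polynomial.C (b i)) p

theorem eval_restrictLine (p : MvPolynomial ι ℝ) (w b : ι → ℂ) (T : ℂ) :
    (restrictLine p w b).eval T = aeval (w + T • b) p := by
  rw [restrictLine, ← Polynomial.coe_aeval_eq_eval, ← AlgHom.coe_restrictScalars' ℝ,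
    comp_aeval_apply]
  congr 2
  funext i
  simp only [AlgHom.coe_restrictScalars', map_add, map_mul, Polynomial.aeval_C,
    Polynomial.aeval_X, Algebra.algebraMap_self, RingHom.id_apply, Pi.add_apply, Pi.smul_apply,
    smul_eq_mul]

variable [Fintype ι] {p : MvPolynomial ι ℝ} {m : ℕ}

/-- Far out, `p (w + T • b) = T ^ m * p (b + T⁻¹ • w)` with `b + T⁻¹ • w` close to `z₀`. -/
theorem norm_le_of_aeval_add_smul_eq_zero (hp : p.IsHomogeneous m) {z₀ : ι → ℂ} {η : ℝ}
    (hη : ∀ z ∈ ball z₀ η, aeval z p ≠ 0) {w b : ι → ℂ} (hb : dist b z₀ < η / 2)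
    {T : ℂ} (hT : aeval (w + T • b) p = 0) : ‖T‖ ≤ 2 * ‖w‖ / η := by
  have hη0 : 0 < η := by linarith [dist_nonneg (x := b) (y := z₀)]
  by_contra! hlt
  have hTpos : 0 < ‖T‖ := lt_of_le_of_lt (by positivity) hlt
  have hT0 : T ≠ 0 := norm_pos_iff.mp hTpos
  have hsmall : ‖T⁻¹ • w‖ < η / 2 := by
    rw [norm_smul, norm_inv, inv_mul_eq_div, div_lt_iff₀ hTpos]
    rw [div_lt_iff₀ hη0] at hlt
    linarith
  have hw : w + T • b = T • (b + T⁻¹ • w) := by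
    rw [smul_add, smul_inv_smul₀ hT0, add_comm]
  rw [hw, hp.aeval_smul] at hT
  refine hη _ ?_ ((mul_eq_zero.mp hT).resolve_left (pow_ne_zero _ hT0))
  calc dist (b + T⁻¹ • w) z₀ ≤ dist (b + T⁻¹ • w) b + dist b z₀ := dist_triangle _ _ _
    _ < η / 2 + η / 2 := by rw [dist_self_add_left]; exact add_lt_add hsmall hb
    _ = η := add_halves η

theorem restrictLine_ne_zero (hp : p.IsHomogeneous m) {b : ι → ℂ}
    (hb : aeval b p ≠ 0) (w : ι → ℂ) : restrictLine p w b ≠ 0 := by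
  obtain ⟨η, hη0, hη⟩ :=
    Metric.eventually_nhds_iff_ball.mp ((continuous_aeval p).continuousAt.eventually_ne hb)
  intro h
  have hroot := norm_le_of_aeval_add_smul_eq_zero hp hη (b := b) (by simpa using hη0)
    (T := ((2 * ‖w‖ / η + 1 : ℝ) : ℂ)) (by rw [← eval_restrictLine, h, Polynomial.eval_zero])
  rw [norm_real, Real.norm_of_nonneg (by positivity)] at hroot
  linarith

end MvPolynomial

theorem Polynomial.exists_sphere_forall_eval_ne_zero {K : Type*} [NormedField K] {g : K[X]}
    (hg : g ≠ 0) (c : K) {B : ℝ} (hB : 0 < B) :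
    ∃ r, 0 < r ∧ r ≤ B ∧ ∀ z ∈ sphere c r, g.eval z ≠ 0 := by
  have hfin : ((fun z => dist z c) '' {z | g.IsRoot z}).Finite :=
    (Polynomial.finite_setOfPred_isRoot hg).image _
  obtain ⟨r, ⟨hr0, hrB⟩, hr⟩ := ((Ioc_infinite hB).sdiff hfin).nonempty
  exact ⟨r, hr0, hrB, fun z hz hroot => hr ⟨z, hroot, hz⟩⟩

theorem le_norm_of_le_norm_on_sphere {f : ℂ → ℂ} {c : ℂ} {r ε : ℝ} (hr : 0 < r)
    (hf : DiffContOnCl ℂ f (ball c r)) (hne : ∀ z ∈ closedBall c r, f z ≠ 0) (hε : 0 < ε)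
    (hsphere : ∀ z ∈ sphere c r, ε ≤ ‖f z‖) : ε ≤ ‖f c‖ := by
  rw [← closure_ball c hr.ne'] at hne
  have hinv : ‖(f c)⁻¹‖ ≤ ε⁻¹ :=
    Complex.norm_le_of_forall_mem_frontier_norm_le isBounded_ball (hf.inv hne)
      (fun z hz => by
        rw [frontier_ball c hr.ne'] at hz
        rw [Pi.inv_apply, norm_inv]
        exact inv_anti₀ hε (hsphere z hz))
      (subset_closure (mem_ball_self hr))
  rw [norm_inv] at hinv
  exact (inv_le_inv₀ (norm_pos_iff.mpr (hne c (subset_closure (mem_ball_self hr)))) hε).mp hinv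

/-- Hurwitz's theorem, for continuous families of polynomials. -/
theorem Polynomial.eval_ne_zero_of_eventually_ne_zero {X : Type*} [TopologicalSpace X]
    {P : X → ℂ[X]} (hP : Continuous fun x : X × ℂ => (P x.1).eval x.2) {t₀ : X}
    (ht₀ : P t₀ ≠ 0) {l : Filter X} [l.NeBot] (hl : l ≤ 𝓝 t₀) {c : ℂ} {B : ℝ} (hB : 0 < B)
    (hne : ∀ᶠ t in l, ∀ z ∈ closedBall c B, (P t).eval z ≠ 0) : (P t₀).eval c ≠ 0 := by
  obtain ⟨r, hr0, hrB, hsphere⟩ := Polynomial.exists_sphere_forall_eval_ne_zero ht₀ c hB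
  obtain ⟨z₁, hz₁, hmin⟩ := (isCompact_sphere c r).exists_isMinOn
    (NormedSpace.sphere_nonempty.mpr hr0.le) (P t₀).continuous.norm.continuousOn
  set ε := ‖(P t₀).eval z₁‖
  have hε : 0 < ε := norm_pos_iff.mpr (hsphere z₁ hz₁)
  have hclose : ∀ᶠ t in l, ∀ z ∈ closedBall c r, dist ((P t).eval z) ((P t₀).eval z) < ε / 2 := by
    obtain ⟨v, hv, hvclose⟩ := (isCompact_closedBall c r).mem_uniformity_of_prod
      (f := fun t z => (P t).eval z) hP.continuousOn (mem_univ t₀)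
      (dist_mem_uniformity (half_pos hε))
    rw [nhdsWithin_univ] at hv
    exact Filter.mem_of_superset (hl hv) fun t ht z hz => hvclose t ht z hz
  obtain ⟨t, htne, htclose⟩ := (hne.and hclose).exists
  have hsphere_t : ∀ z ∈ sphere c r, ε / 2 ≤ ‖(P t).eval z‖ := fun z hz => by
    have h1 : ε ≤ ‖(P t₀).eval z‖ := hmin hz
    have h2 := htclose z (sphere_subset_closedBall hz)
    rw [dist_eq_norm] at h2
    linarith [norm_sub_norm_le ((P t₀).eval z) ((P t).eval z),
      norm_sub_rev ((P t).eval z) ((P t₀).eval z)]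
  have hcenter := le_norm_of_le_norm_on_sphere hr0 (P t).differentiable.diffContOnCl
    (fun z hz => htne z (closedBall_subset_closedBall hrB hz)) (half_pos hε) hsphere_t
  intro h0
  have h := htclose c (mem_closedBall_self hr0.le)
  rw [h0, dist_zero_right] at h
  linarith

theorem Polynomial.isClosed_setOf_exists_eval_eq_zero {P : ℝ → ℂ[X]}
    (hP : Continuous fun x : ℝ × ℂ => (P x.1).eval x.2) {K : Set ℝ} (hK : IsCompact K)
    {F : Set ℂ} (hF : IsClosed F) {R : ℝ} (hR : ∀ r ∈ K, ∀ z, (P r).eval z = 0 → ‖z‖ ≤ R) :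
    IsClosed {r | r ∈ K ∧ ∃ z ∈ F, (P r).eval z = 0} := by
  have hroots : IsCompact ((K ×ˢ (F ∩ closedBall 0 R)) ∩ {x | (P x.1).eval x.2 = 0}) :=
    (hK.prod ((isCompact_closedBall 0 R).inter_left hF)).inter_right
      (isClosed_eq hP continuous_const)
  convert (hroots.image continuous_fst).isClosed using 1
  ext r
  constructor
  · rintro ⟨hr, z, hz, h0⟩
    exact ⟨(r, z), ⟨⟨hr, hz, mem_closedBall_zero_iff.mpr (hR r hr z h0)⟩, h0⟩, rfl⟩
  · rintro ⟨⟨r', z⟩, ⟨⟨hr, hz, -⟩, h0⟩, rfl⟩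
    exact ⟨hr, z, hz, h0⟩

theorem Polynomial.forall_mem_eval_ne_zero_of_homotopy {P : ℝ → ℂ[X]}
    (hP : Continuous fun x : ℝ × ℂ => (P x.1).eval x.2) (hP0 : ∀ r ∈ Icc (0 : ℝ) 1, P r ≠ 0)
    {U : Set ℂ} (hU : IsOpen U)
    (hfront : ∀ r ∈ Icc (0 : ℝ) 1, ∀ z ∈ frontier U, (P r).eval z ≠ 0)
    {R : ℝ} (hR : ∀ r ∈ Icc (0 : ℝ) 1, ∀ z, (P r).eval z = 0 → ‖z‖ ≤ R)
    (hstart : ∀ z ∈ U, (P 0).eval z ≠ 0) : ∀ z ∈ U, (P 1).eval z ≠ 0 := by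
  have hmemU : ∀ r ∈ Icc (0 : ℝ) 1, ∀ z ∈ closure U, (P r).eval z = 0 → z ∈ U :=
    fun r hr z hz h0 => by_contra fun hzU => hfront r hr z (hU.frontier_eq ▸ ⟨hz, hzU⟩) h0
  set s := {r | ∀ z ∈ closure U, (P r).eval z ≠ 0}
  have hZ := Polynomial.isClosed_setOf_exists_eval_eq_zero hP isCompact_Icc
    (isClosed_closure (s := U)) hR
  suffices Icc (0 : ℝ) 1 ⊆ s from fun z hz => this (right_mem_Icc.mpr zero_le_one) z
    (subset_closure hz)
  -- Continuous induction: a root in `U` persists nearby (Hurwitz), and bounded roots make the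
  -- parameters with a root in `closure U` a closed set.
  refine IsClosed.Icc_subset_of_forall_mem_nhdsWithin ?_ ?_ ?_
  · refine isClosed_of_closure_subset fun r hr => ?_
    have hrI : r ∈ Icc (0 : ℝ) 1 := closure_minimal inter_subset_right isClosed_Icc hr
    refine ⟨fun z hz h0 => ?_, hrI⟩
    obtain ⟨B, hB, hball⟩ := Metric.isOpen_iff.mp hU z (hmemU r hrI z hz h0)
    have := mem_closure_iff_nhdsWithin_neBot.mp hr
    refine Polynomial.eval_ne_zero_of_eventually_ne_zero hP (hP0 r hrI)
      (nhdsWithin_le_nhds (s := s ∩ Icc 0 1))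
      (half_pos hB) ?_ h0
    filter_upwards [self_mem_nhdsWithin] with t ht z' hz'
    exact ht.1 z' (subset_closure (hball (closedBall_subset_ball (half_lt_self hB) hz')))
  · intro z hz
    by_cases hzU : z ∈ U
    · exact hstart z hzU
    · exact hfront 0 (left_mem_Icc.mpr zero_le_one) z (hU.frontier_eq ▸ ⟨hz, hzU⟩)
  · rintro x ⟨hxs, hxI⟩
    have hx : x ∉ {r | r ∈ Icc (0 : ℝ) 1 ∧ ∃ z ∈ closure U, (P r).eval z = 0} :=
      fun ⟨_, z, hz, h0⟩ => hxs z hz h0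
    filter_upwards [nhdsWithin_le_nhds (hZ.isOpen_compl.mem_nhds hx), Ioo_mem_nhdsGT hxI.2]
      with t htZ ht z hz h0
    exact htZ ⟨⟨hxI.1.trans ht.1.le, ht.2.le⟩, z, hz, h0⟩

namespace MvPolynomial

variable {ι : Type*} {p : MvPolynomial ι ℝ} {m : ℕ}

/-- For homogeneous `p` this is hyperbolicity in direction `e`, see `isHyperbolic_of_forall` and
`aeval_add_I_mul_ne_zero`. -/
def IsHyperbolic (p : MvPolynomial ι ℝ) (e : ι → ℝ) : Prop :=
  ∀ (a : ι → ℝ) (c : ℝ), c ≠ 0 → aeval (fun i => (a i : ℂ) + c * I * e i) p ≠ 0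

theorem aeval_smul_ne_zero (hp : p.IsHomogeneous m) {t : ℂ} (ht : t ≠ 0) {z : ι → ℂ}
    (hz : aeval z p ≠ 0) : aeval (t • z) p ≠ 0 := by
  rw [hp.aeval_smul]
  exact mul_ne_zero (pow_ne_zero _ ht) hz

theorem isHyperbolic_of_forall (hp : p.IsHomogeneous m) {e : ι → ℝ}
    (h : ∀ y : ι → ℝ, aeval (fun i => (e i : ℂ) + I * y i) p ≠ 0) : IsHyperbolic p e := by
  intro a c hc
  have hc' : (c : ℂ) ≠ 0 := ofReal_ne_zero.mpr hc
  convert aeval_smul_ne_zero hp (mul_ne_zero hc' I_ne_zero) (h fun i => -a i / c) using 3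
  funext i
  simp only [Pi.smul_apply, smul_eq_mul]
  push_cast
  field_simp
  linear_combination (a i : ℂ) * I_sq

theorem aeval_add_I_mul_ne_zero (hp : p.IsHomogeneous m) {e : ι → ℝ}
    (h : ∀ a : ι → ℝ, aeval (fun i => (a i : ℂ) + I * e i) p ≠ 0) (y : ι → ℝ) :
    aeval (fun i => (e i : ℂ) + I * y i) p ≠ 0 := by
  convert aeval_smul_ne_zero hp (neg_ne_zero.mpr I_ne_zero) (h fun i => -y i) using 3
  funext i
  simp only [Pi.smul_apply, smul_eq_mul]
  push_cast
  linear_combination (e i : ℂ) * I_sq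

theorem IsHyperbolic.of_pos (hp : p.IsHomogeneous m) {e : ι → ℝ}
    (h : ∀ (a : ι → ℝ) (c : ℝ), 0 < c → aeval (fun i => (a i : ℂ) + c * I * e i) p ≠ 0) :
    IsHyperbolic p e := by
  intro a c hc
  rcases hc.lt_or_gt with hneg | hpos
  · convert aeval_smul_ne_zero hp (neg_ne_zero.mpr one_ne_zero)
      (h (fun i => -a i) (-c) (neg_pos.mpr hneg)) using 3
    funext i
    simp only [Pi.smul_apply, smul_eq_mul]
    push_cast
    ring
  · exact h a c hpos

variable [Fintype ι] {u : ι → ℝ} {η : ℝ}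

theorem IsHyperbolic.aeval_add_smul_ne_zero (hp : p.IsHomogeneous m) (hu : IsHyperbolic p u)
    (hη : ∀ z ∈ ball (fun i => (u i : ℂ)) η, aeval z p ≠ 0) {b : ι → ℝ}
    (hb : dist (fun i => (b i : ℂ)) (fun i => (u i : ℂ)) < η / 2) (a : ι → ℝ) {ε : ℝ}
    (hε : 0 < ε) {T : ℂ} (hT : 0 < T.im) :
    aeval ((fun i => (a i : ℂ) + ε * I * u i) + T • fun i => (b i : ℂ)) p ≠ 0 := by
  set uc : ι → ℂ := fun i => (u i : ℂ)
  set bc : ι → ℂ := fun i => (b i : ℂ)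
  set w : ι → ℂ := fun i => (a i : ℂ) + ε * I * u i
  set dir : ℝ → ι → ℂ := fun r => uc + (r : ℂ) • (bc - uc)
  have hdir : ∀ r ∈ Icc (0 : ℝ) 1, dist (dir r) uc < η / 2 := fun r hr => by
    rw [dist_self_add_left, norm_smul, norm_real, Real.norm_of_nonneg hr.1, ← dist_eq_norm]
    exact lt_of_le_of_lt (mul_le_of_le_one_left dist_nonneg hr.2) hb
  have hcont : Continuous fun x : ℝ × ℂ => (restrictLine p w (dir x.1)).eval x.2 := by
    simp only [eval_restrictLine]
    fun_prop
  have hne0 : ∀ r ∈ Icc (0 : ℝ) 1, restrictLine p w (dir r) ≠ 0 := fun r hr =>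
    restrictLine_ne_zero hp (hη _ (mem_ball.mpr (by
      linarith [hdir r hr, dist_nonneg (x := dir r) (y := uc)]))) w
  have hreal : ∀ (r : ℝ), ∀ z ∈ frontier {z : ℂ | 0 < z.im},
      (restrictLine p w (dir r)).eval z ≠ 0 := by
    intro r z hz
    rw [frontier_setOfPred_lt_im, mem_ofPred_eq] at hz
    have hz' : (z.im : ℂ) = 0 := by exact_mod_cast hz
    rw [eval_restrictLine]
    convert hu (fun i => a i + z.re * (u i + r * (b i - u i))) ε hε.ne' using 3
    funext i
    simp only [w, dir, uc, bc, Pi.add_apply, Pi.smul_apply, Pi.sub_apply, smul_eq_mul]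
    push_cast
    linear_combination (-(u i : ℂ) - r * (b i - u i)) * (re_add_im z)
      + (I * (u i + r * (b i - u i))) * hz'
  have hbound : ∀ r ∈ Icc (0 : ℝ) 1, ∀ z, (restrictLine p w (dir r)).eval z = 0 →
      ‖z‖ ≤ 2 * ‖w‖ / η := fun r hr z hz =>
    norm_le_of_aeval_add_smul_eq_zero hp hη (hdir r hr) (by rwa [eval_restrictLine] at hz)
  have hstart : ∀ z ∈ {z : ℂ | 0 < z.im}, (restrictLine p w (dir 0)).eval z ≠ 0 := by
    intro z (hz : 0 < z.im)
    rw [eval_restrictLine]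
    convert hu (fun i => a i + z.re * u i) (ε + z.im) (by positivity) using 3
    funext i
    simp only [w, dir, uc, Pi.add_apply, Pi.smul_apply, Pi.sub_apply, smul_eq_mul]
    push_cast
    linear_combination (-(u i : ℂ)) * (re_add_im z)
  simpa [eval_restrictLine, dir] using Polynomial.forall_mem_eval_ne_zero_of_homotopy hcont hne0
    (isOpen_lt continuous_const continuous_im) (fun r _ => hreal r) hbound hstart T hT

theorem IsHyperbolic.of_dist_lt (hp : p.IsHomogeneous m) (hu : IsHyperbolic p u)
    (hη : ∀ z ∈ ball (fun i => (u i : ℂ)) η, aeval z p ≠ 0) {b : ι → ℝ}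
    (hb : dist (fun i => (b i : ℂ)) (fun i => (u i : ℂ)) < η / 2) : IsHyperbolic p b := by
  have hη0 : 0 < η := by linarith [dist_nonneg (x := fun i => (b i : ℂ)) (y := fun i => (u i : ℂ))]
  refine IsHyperbolic.of_pos hp fun a c hc => ?_
  set Q : ℝ → ℂ[X] := fun ε => restrictLine p (fun i => (a i : ℂ) + ε * I * u i) fun i => b i
  have hQ0 : Q 0 ≠ 0 := restrictLine_ne_zero hp (hη _ (mem_ball.mpr (by linarith))) _
  -- let `ε → 0⁺` in `aeval_add_smul_ne_zero`
  have hlim := Polynomial.eval_ne_zero_of_eventually_ne_zero (P := Q) (c := c * I)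
    (by simp only [Q, eval_restrictLine]; fun_prop) hQ0
    (nhdsWithin_le_nhds (s := Ioi 0)) (half_pos hc) <| by
      filter_upwards [self_mem_nhdsWithin] with ε hε z hz
      have him : |z.im - c| ≤ c / 2 := by
        simpa using (abs_im_le_norm (z - c * I)).trans (mem_closedBall_iff_norm.mp hz)
      rw [eval_restrictLine]
      exact hu.aeval_add_smul_ne_zero hp hη hb a hε (by linarith [(abs_le.mp him).1])
  convert hlim using 1
  simp only [Q, eval_restrictLine]
  congr 2
  funext i
  simp only [Pi.add_apply, Pi.smul_apply, smul_eq_mul]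
  push_cast
  ring

theorem IsHyperbolic.eventually_isHyperbolic (hp : p.IsHomogeneous m) (hu : IsHyperbolic p u) :
    ∀ᶠ b in 𝓝 u, IsHyperbolic p b := by
  have hpu : aeval (fun i => (u i : ℂ)) p ≠ 0 := by
    have h := hu 0 1 one_ne_zero
    contrapose! h
    rw [show (fun i => ((0 : ι → ℝ) i : ℂ) + ((1 : ℝ) : ℂ) * I * u i) = I • fun i => (u i : ℂ) by
      funext i; simp [mul_comm], hp.aeval_smul, h, mul_zero]
  obtain ⟨η, hη0, hη⟩ :=
    Metric.eventually_nhds_iff_ball.mp ((continuous_aeval p).continuousAt.eventually_ne hpu)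
  have hcont : Continuous fun b : ι → ℝ => fun i => (b i : ℂ) := by fun_prop
  filter_upwards [hcont.continuousAt.preimage_mem_nhds (ball_mem_nhds _ (half_pos hη0))] with b hb
  exact hu.of_dist_lt hp hη hb

end MvPolynomial

section Localization

variable {ι : Type*} {p : MvPolynomial ι ℝ} {x : ι → ℝ} {q : ℕ → MvPolynomial ι ℝ}
  {s : Finset ℕ} {k : ℕ}

theorem aeval_add_eq_sum (hexp : ∀ y : ι → ℝ, eval (fun i => x i + y i) p = ∑ j ∈ s, eval y (q j))
    (z : ι → ℂ) : aeval (fun i => (x i : ℂ) + z i) p = ∑ j ∈ s, aeval z (q j) := by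
  have key : aeval (fun i => X i + C (x i)) p = ∑ j ∈ s, q j := MvPolynomial.funext fun y => by
    rw [map_sum, ← hexp y]
    exact aeval_aeval_X_add_C p x y
  rw [← map_sum, ← key, aeval_aeval_X_add_C]
  rfl

theorem aeval_add_mul_eq_pow_mul_sum
    (hexp : ∀ y : ι → ℝ, eval (fun i => x i + y i) p = ∑ j ∈ s, eval y (q j))
    (hq : ∀ j, (q j).IsHomogeneous j) (hlow : ∀ j, j < k → q j = 0) (σ : ℂ) (z : ι → ℂ) :
    aeval (fun i => (x i : ℂ) + σ * z i) p = σ ^ k * ∑ j ∈ s, σ ^ (j - k) * aeval z (q j) := by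
  rw [aeval_add_eq_sum hexp, Finset.mul_sum]
  refine Finset.sum_congr rfl fun j _ => ?_
  rw [show (fun i => σ * z i) = σ • z from rfl, (hq j).aeval_smul]
  rcases lt_or_ge j k with hjk | hjk
  · simp [hlow j hjk]
  · rw [← mul_assoc, ← pow_add, Nat.add_sub_cancel' hjk]

/-- For `σ ≠ 0` this is `ζ ↦ σ⁻ᵏ p (x + σ (w + ζ b))`, see `pow_mul_eval_rescaledLine`. -/
def rescaledLine (q : ℕ → MvPolynomial ι ℝ) (s : Finset ℕ) (k : ℕ) (w b : ι → ℂ) (σ : ℝ) :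
    ℂ[X] :=
  ∑ j ∈ s, Polynomial.C ((σ : ℂ) ^ (j - k)) * restrictLine (q j) w b

theorem eval_rescaledLine (w b : ι → ℂ) (σ : ℝ) (ζ : ℂ) :
    (rescaledLine q s k w b σ).eval ζ = ∑ j ∈ s, (σ : ℂ) ^ (j - k) * aeval (w + ζ • b) (q j) := by
  simp [rescaledLine, Polynomial.eval_finsetSum, eval_restrictLine]

theorem continuous_eval_rescaledLine (w b : ι → ℂ) :
    Continuous fun x : ℝ × ℂ => (rescaledLine q s k w b x.1).eval x.2 := by
  simp only [eval_rescaledLine]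
  fun_prop

theorem rescaledLine_zero (hlow : ∀ j, j < k → q j = 0) (hks : k ∈ s) (w b : ι → ℂ) :
    rescaledLine q s k w b 0 = restrictLine (q k) w b := by
  rw [rescaledLine, Finset.sum_eq_single_of_mem k hks fun j _ hjk => ?_]
  · simp
  rcases hjk.lt_or_gt with hjk | hjk
  · simp [hlow j hjk, restrictLine]
  · simp [Nat.sub_ne_zero_of_lt hjk]

theorem pow_mul_eval_rescaledLine
    (hexp : ∀ y : ι → ℝ, eval (fun i => x i + y i) p = ∑ j ∈ s, eval y (q j))
    (hq : ∀ j, (q j).IsHomogeneous j) (hlow : ∀ j, j < k → q j = 0) (w b : ι → ℂ) (σ : ℝ)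
    (ζ : ℂ) :
    (σ : ℂ) ^ k * (rescaledLine q s k w b σ).eval ζ
      = aeval (fun i => (x i : ℂ) + σ * (w + ζ • b) i) p := by
  rw [eval_rescaledLine, aeval_add_mul_eq_pow_mul_sum hexp hq hlow]

theorem aeval_add_I_mul_ne_zero_of_eventually_isHyperbolic [Fintype ι] {u : ι → ℝ}
    (hcone : ∀ᶠ b in 𝓝 u, IsHyperbolic p b)
    (hexp : ∀ y : ι → ℝ, eval (fun i => x i + y i) p = ∑ j ∈ s, eval y (q j))
    (hq : ∀ j, (q j).IsHomogeneous j) (hlow : ∀ j, j < k → q j = 0) (hks : k ∈ s)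
    (hk : q k ≠ 0) (a : ι → ℝ) : aeval (fun i => (a i : ℂ) + I * u i) (q k) ≠ 0 := by
  obtain ⟨v, hv⟩ : ∃ v, eval v (q k) ≠ 0 := by
    by_contra! h
    exact hk (MvPolynomial.funext fun v => by simpa using h v)
  obtain ⟨η, hη0, hη⟩ := Metric.eventually_nhds_iff.mp hcone
  set w : ι → ℂ := fun i => (a i : ℂ) + I * u i
  set vc : ι → ℂ := fun i => (v i : ℂ)
  set B := η / (‖v‖ + 1)
  have hB : 0 < B := by positivity
  have hPk : rescaledLine q s k w vc 0 ≠ 0 := by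
    rw [rescaledLine_zero hlow hks]
    exact restrictLine_ne_zero (hq k) (by simpa [vc, aeval_ofReal] using hv) w
  suffices hne : ∀ᶠ σ in 𝓝[≠] 0, ∀ ζ ∈ closedBall 0 B, (rescaledLine q s k w vc σ).eval ζ ≠ 0 by
    simpa [rescaledLine_zero hlow hks, eval_restrictLine] using
      Polynomial.eval_ne_zero_of_eventually_ne_zero (continuous_eval_rescaledLine w vc) hPk
        nhdsWithin_le_nhds hB hne
  filter_upwards [self_mem_nhdsWithin] with σ hσ ζ hζ
  have hdir : dist (u + ζ.im • v) u < η := by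
    rw [dist_self_add_left, norm_smul, Real.norm_eq_abs]
    calc |ζ.im| * ‖v‖ ≤ B * ‖v‖ :=
          mul_le_mul_of_nonneg_right ((abs_im_le_norm ζ).trans (mem_closedBall_zero_iff.mp hζ))
            (norm_nonneg v)
      _ < B * (‖v‖ + 1) := by gcongr; linarith
      _ = η := div_mul_cancel₀ η (by positivity)
  refine right_ne_zero_of_mul (a := (σ : ℂ) ^ k) ?_
  rw [pow_mul_eval_rescaledLine hexp hq hlow]
  convert hη hdir (fun i => x i + σ * (a i + ζ.re * v i)) σ hσ using 3
  funext i
  simp only [w, vc, Pi.add_apply, Pi.smul_apply, smul_eq_mul]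
  push_cast
  linear_combination (-σ * v i : ℂ) * re_add_im ζ

end Localization

theorem stmt4_general (d m k : ℕ) (p : MvPolynomial (Fin d) ℝ)
    (hp : p.IsHomogeneous m) (u : Fin d → ℝ)
    (hyp : ∀ y : Fin d → ℝ,
      MvPolynomial.aeval (fun j => (u j : ℂ) + Complex.I * (y j : ℂ)) p ≠ 0)
    (x : Fin d → ℝ)
    (q : ℕ → MvPolynomial (Fin d) ℝ)
    (hq : ∀ j, (q j).IsHomogeneous j)
    (hexp : ∀ y : Fin d → ℝ,
      MvPolynomial.eval (fun i => x i + y i) p =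
        ∑ j ∈ Finset.range (m + 1), MvPolynomial.eval y (q j))
    (hk : q k ≠ 0) (hlow : ∀ j, j < k → q j = 0) :
    ∀ y : Fin d → ℝ,
      MvPolynomial.aeval (fun j => (u j : ℂ) + Complex.I * (y j : ℂ)) (q k) ≠ 0 := by
  have hkm : k ∈ Finset.range (m + 1) := by
    by_contra hkm
    refine hyp 0 ?_
    have hp0 : p = 0 := MvPolynomial.funext fun w => by
      have h := hexp (w - x)
      simp only [Pi.sub_apply, add_sub_cancel] at h
      rw [h, map_zero]
      exact Finset.sum_eq_zero fun j hj => by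
        rw [hlow j (by simp only [Finset.mem_range] at hj hkm; omega), map_zero]
    simp [hp0]
  exact aeval_add_I_mul_ne_zero (hq k) <|
    aeval_add_I_mul_ne_zero_of_eventually_isHyperbolic
      ((isHyperbolic_of_forall hp hyp).eventually_isHyperbolic hp) hexp hq hlow hkm hk

/-- **Proposition (hyperbolicity of the localization).**
Let `p` be a nonzero real homogeneous polynomial of degree `m`, hyperbolic in direction
`u`, and fix `x` with `p(x) = 0`.  Write `p(x + y) = ∑_{j} q_j(y)` where each `q_j` is
homogeneous of degree `j`, and let `q_k` be the lowest nonvanishing homogeneous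
component (the localization of `p` at `x`).  Then `q_k` is hyperbolic in direction `u`. -/
theorem stmt4 (d m k : ℕ) (p : MvPolynomial (Fin d) ℝ) (hp0 : p ≠ 0)
    (hp : p.IsHomogeneous m) (u : Fin d → ℝ)
    (hyp : ∀ y : Fin d → ℝ,
      MvPolynomial.aeval (fun j => (u j : ℂ) + Complex.I * (y j : ℂ)) p ≠ 0)
    (x : Fin d → ℝ) (hx : MvPolynomial.eval x p = 0)
    (q : ℕ → MvPolynomial (Fin d) ℝ)
    (hq : ∀ j, (q j).IsHomogeneous j)
    (hexp : ∀ y : Fin d → ℝ,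
      MvPolynomial.eval (fun i => x i + y i) p =
        ∑ j ∈ Finset.range (m + 1), MvPolynomial.eval y (q j))
    (hk : q k ≠ 0) (hlow : ∀ j, j < k → q j = 0) :
    ∀ y : Fin d → ℝ,
      MvPolynomial.aeval (fun j => (u j : ℂ) + Complex.I * (y j : ℂ)) (q k) ≠ 0 :=
  stmt4_general d m k p hp u hyp x q hq hexp hk hlow
end
end

section
/- Let d ≥ 1 and let f be a real polynomial of degree d in one variable with nonnegative coefficients, f(1) = 1, and all complex roots of f real. Let C := inf_{t > 0} f(t)/t. Then f′(0) ≥ ((d−1)/d)^{d−1} · C. -/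
/-!
If `f(0) > 0` and `d ≥ 2`, the roots of `f` are `-r₁, …, -r_d` with `rᵢ > 0`, so
`f(t) = f(0) ∏ (1 + t / rᵢ)` and `f'(0) = f(0) S` with `S = ∑ 1 / rᵢ`. AM-GM gives
`f(t) ≤ f(0) (1 + t S / d)^d`, and at `t = d / ((d - 1) S)` this reads
`f(t) / t ≤ (d / (d - 1))^(d - 1) f'(0)`. If `f(0) = 0` or `d ≤ 1`, then `f(t) / t → f'(0)`
as `t → 0⁺`, resp. `t → ∞`, so already `C ≤ f'(0)`.
-/

open Polynomial Filter Topology Set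

theorem Real.finset_prod_le_sum_div_card_pow {ι : Type*} (s : Finset ι) (z : ι → ℝ)
    (hz : ∀ i ∈ s, 0 ≤ z i) : ∏ i ∈ s, z i ≤ ((∑ i ∈ s, z i) / s.card) ^ s.card := by
  rcases s.eq_empty_or_nonempty with rfl | hs
  · simp
  have hn : s.card ≠ 0 := hs.card_ne_zero
  have hamgm := Real.geom_mean_le_arith_mean_weighted s (fun _ => (s.card : ℝ)⁻¹) z
    (fun _ _ => by positivity) (by simp [hn]) hz
  rw [div_eq_inv_mul, Finset.mul_sum]
  calc ∏ i ∈ s, z i = (∏ i ∈ s, z i ^ (s.card : ℝ)⁻¹) ^ s.card := by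
        rw [← Finset.prod_pow]
        exact Finset.prod_congr rfl fun i hi => (Real.rpow_inv_natCast_pow (hz i hi) hn).symm
    _ ≤ (∑ i ∈ s, (s.card : ℝ)⁻¹ * z i) ^ s.card :=
        pow_le_pow_left₀ (Finset.prod_nonneg fun i hi => Real.rpow_nonneg (hz i hi) _) hamgm _

theorem Real.multiset_prod_le_sum_div_card_pow (m : Multiset ℝ) (hm : ∀ x ∈ m, 0 ≤ x) :
    m.prod ≤ (m.sum / Multiset.card m) ^ Multiset.card m := by
  rw [Multiset.prod_eq_prod_toEnumFinset, Multiset.sum_eq_sum_toEnumFinset,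
    ← Multiset.card_toEnumFinset]
  exact Real.finset_prod_le_sum_div_card_pow _ _ fun p hp =>
    hm _ (Multiset.mem_of_mem_toEnumFinset hp)

theorem Nat.cast_sub_one_div_self_pow_mem_Icc (n : ℕ) :
    (((n : ℝ) - 1) / n) ^ (n - 1) ∈ Icc 0 1 := by
  rcases n with _ | n
  · simp
  · rw [Nat.cast_succ, add_sub_cancel_right]
    exact ⟨by positivity,
      pow_le_one₀ (by positivity) (div_le_one_of_le₀ (by linarith) (by positivity))⟩

theorem csInf_image_le_of_tendsto {α β : Type*} [ConditionallyCompleteLinearOrder β]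
    [TopologicalSpace β] [OrderTopology β] {g : α → β} {s : Set α} {l : Filter α} [l.NeBot]
    {b : β} (hbdd : BddBelow (g '' s)) (hl : ∀ᶠ x in l, x ∈ s) (hg : Tendsto g l (𝓝 b)) :
    sInf (g '' s) ≤ b :=
  ge_of_tendsto hg (hl.mono fun _ hx => csInf_le hbdd (mem_image_of_mem g hx))

namespace Polynomial

variable {f : ℝ[X]}

theorem splits_of_forall_aeval_eq_zero_im_eq_zero
    (hroots : ∀ z : ℂ, aeval z f = 0 → z.im = 0) : f.Splits :=
  Splits.of_splits_map (algebraMap ℝ ℂ) (IsAlgClosed.splits _) fun z hz =>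
    ⟨z.re, Complex.ext rfl (hroots z (mem_aroots'.mp hz).2).symm⟩

theorem coeff_zero_le_eval (hf : ∀ k, 0 ≤ f.coeff k) {x : ℝ} (hx : 0 ≤ x) :
    f.coeff 0 ≤ f.eval x := by
  rw [eval_eq_sum_range]
  simpa using Finset.single_le_sum (fun i _ => mul_nonneg (hf i) (pow_nonneg hx i))
    (Finset.mem_range.mpr (Nat.succ_pos f.natDegree))

theorem eval_div_nonneg (hf : ∀ k, 0 ≤ f.coeff k) {t : ℝ} (ht : 0 ≤ t) : 0 ≤ f.eval t / t :=
  div_nonneg ((hf 0).trans (coeff_zero_le_eval hf ht)) ht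

theorem lt_zero_of_mem_roots (hf : ∀ k, 0 ≤ f.coeff k) (h0 : 0 < f.coeff 0) {a : ℝ}
    (ha : a ∈ f.roots) : a < 0 := by
  by_contra! h
  have := coeff_zero_le_eval hf h
  rw [(isRoot_of_mem_roots ha).eq_zero] at this
  linarith

theorem Splits.eval_eq_eval_zero_mul_prod (hf : f.Splits) (h0 : ∀ a ∈ f.roots, a ≠ 0) (t : ℝ) :
    f.eval t = f.eval 0 * (f.roots.map fun a => 1 + t * (-a)⁻¹).prod := by
  rw [hf.eval_eq_prod_roots, hf.eval_eq_prod_roots, mul_assoc, ← Multiset.prod_map_mul]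
  congr 2
  refine Multiset.map_congr rfl fun a ha => ?_
  field_simp [h0 a ha]
  ring

theorem Splits.eval_derivative_zero (hf : f.Splits) (h0 : ∀ a ∈ f.roots, a ≠ 0) :
    f.derivative.eval 0 = f.eval 0 * (f.roots.map fun a => (-a)⁻¹).sum := by
  classical
  rw [hf.eval_derivative, hf.eval_eq_prod_roots, mul_assoc]
  congr 1
  rw [← Multiset.sum_map_mul_left]
  congr 1
  refine Multiset.map_congr rfl fun a ha => ?_
  rw [← Multiset.prod_map_erase ha]
  field_simp [h0 a ha]
  ring

theorem Splits.eval_le_eval_zero_mul_pow (hf : f.Splits) (hneg : ∀ a ∈ f.roots, a < 0)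
    (h0 : 0 ≤ f.eval 0) {t : ℝ} (ht : 0 ≤ t) :
    f.eval t ≤ f.eval 0 *
      (1 + t * (f.roots.map fun a => (-a)⁻¹).sum / f.natDegree) ^ f.natDegree := by
  have hamgm := Real.multiset_prod_le_sum_div_card_pow (f.roots.map fun a => 1 + t * (-a)⁻¹)
    (by
      simp only [Multiset.mem_map]
      rintro _ ⟨a, ha, rfl⟩
      have := inv_nonneg.mpr (neg_nonneg.mpr (hneg a ha).le)
      positivity)
  rw [hf.eval_eq_eval_zero_mul_prod fun a ha => (hneg a ha).ne]
  refine mul_le_mul_of_nonneg_left (hamgm.trans_eq ?_) h0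
  rw [Multiset.card_map, splits_iff_card_roots.mp hf]
  obtain hd | hd := eq_or_ne f.natDegree 0
  · simp [hd]
  congr 1
  rw [Multiset.sum_map_add, Multiset.sum_map_mul_left, Multiset.map_const', Multiset.sum_replicate,
    splits_iff_card_roots.mp hf, nsmul_eq_mul, mul_one, add_div, div_self (by positivity)]

theorem Splits.exists_mul_eval_div_le (hf : f.Splits) (hneg : ∀ a ∈ f.roots, a < 0)
    (h0 : 0 ≤ f.eval 0) (hd : 2 ≤ f.natDegree) :
    ∃ t > 0, (((f.natDegree : ℝ) - 1) / f.natDegree) ^ (f.natDegree - 1) * (f.eval t / t) ≤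
      f.derivative.eval 0 := by
  set d := f.natDegree
  set S := (f.roots.map fun a => (-a)⁻¹).sum
  have hd' : (2 : ℝ) ≤ d := by exact_mod_cast hd
  have hd1 : (0 : ℝ) < d - 1 := by linarith
  have hS : 0 < S := by
    have hne : f.roots ≠ ∅ := by
      rw [Multiset.empty_eq_zero, ← Multiset.card_pos, splits_iff_card_roots.mp hf]
      omega
    simpa only [Multiset.map_const', Multiset.sum_replicate, smul_zero] using
      Multiset.sum_lt_sum_of_nonempty (f := fun _ => (0 : ℝ)) hne
        fun a ha => inv_pos.mpr (neg_pos.mpr (hneg a ha))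
  -- the minimiser of `(1 + t S / d) ^ d / t`
  set t : ℝ := d / ((d - 1) * S)
  have ht : 0 < t := by positivity
  have hbound := hf.eval_le_eval_zero_mul_pow hneg h0 ht.le
  have hbase : 1 + t * S / d = d / (d - 1) := by
    simp only [t]
    field_simp
    ring
  rw [hbase] at hbound
  refine ⟨t, ht, ?_⟩
  rw [hf.eval_derivative_zero fun a ha => (hneg a ha).ne]
  calc ((d - 1) / d) ^ (d - 1) * (f.eval t / t)
      ≤ ((d - 1) / d) ^ (d - 1) * (f.eval 0 * (d / (d - 1)) ^ d / t) := by gcongr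
    _ = (((d - 1) / d) * (d / (d - 1))) ^ (d - 1) * f.eval 0 * (d / (d - 1)) / t := by
      rw [← pow_sub_one_mul (by omega : d ≠ 0), mul_pow]
      ring
    _ = f.eval 0 * S := by
      simp only [t]
      field_simp
      rw [one_pow, one_mul]

theorem tendsto_eval_div_nhdsGT_zero (h0 : f.eval 0 = 0) :
    Tendsto (fun t => f.eval t / t) (𝓝[>] 0) (𝓝 (f.derivative.eval 0)) := by
  simpa [h0, div_eq_inv_mul] using (f.hasDerivAt 0).tendsto_slope_zero_right

theorem tendsto_eval_div_atTop (hf : f.natDegree ≤ 1) :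
    Tendsto (fun t => f.eval t / t) atTop (𝓝 (f.derivative.eval 0)) := by
  rw [eq_X_add_C_of_natDegree_le_one hf]
  have : Tendsto (fun t : ℝ => f.coeff 1 + f.coeff 0 / t) atTop (𝓝 (f.coeff 1 + 0)) :=
    tendsto_const_nhds.add (tendsto_const_nhds.div_atTop tendsto_id)
  refine (this.congr' ?_).trans_eq ?_
  · filter_upwards [eventually_ne_atTop 0] with t ht
    simp only [eval_add, eval_mul, eval_C, eval_X]
    field_simp
  · simp

theorem csInf_eval_div_le_eval_derivative_zero
    (hbdd : BddBelow ((fun t => f.eval t / t) '' Ioi 0)) (h : f.eval 0 = 0 ∨ f.natDegree ≤ 1) :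
    sInf ((fun t => f.eval t / t) '' Ioi 0) ≤ f.derivative.eval 0 := by
  rcases h with h0 | hdeg
  · exact csInf_image_le_of_tendsto (l := 𝓝[>] 0) hbdd self_mem_nhdsWithin
      (tendsto_eval_div_nhdsGT_zero h0)
  · exact csInf_image_le_of_tendsto hbdd (Ioi_mem_atTop 0) (tendsto_eval_div_atTop hdeg)

end Polynomial

theorem stmt6_general (d : ℕ) (f : Polynomial ℝ) (hdeg : f.natDegree = d)
    (hcoeff : ∀ k, 0 ≤ f.coeff k)
    (hroots : ∀ z : ℂ, Polynomial.aeval z f = 0 → z.im = 0) :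
    (((d : ℝ) - 1) / (d : ℝ)) ^ (d - 1) *
        sInf ((fun t : ℝ => f.eval t / t) '' Set.Ioi 0) ≤
      (Polynomial.derivative f).eval 0 := by
  have hK : ∀ y ∈ (fun t : ℝ => f.eval t / t) '' Ioi 0, 0 ≤ y := by
    rintro _ ⟨t, ht, rfl⟩
    exact eval_div_nonneg hcoeff ht.le
  have hfactor := Nat.cast_sub_one_div_self_pow_mem_Icc d
  by_cases hsimple : f.eval 0 = 0 ∨ d ≤ 1
  · exact (mul_le_of_le_one_left (Real.sInf_nonneg hK) hfactor.2).trans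
      (csInf_eval_div_le_eval_derivative_zero ⟨0, hK⟩ (hdeg ▸ hsimple))
  push Not at hsimple
  have h0 : 0 < f.coeff 0 := (hcoeff 0).lt_of_ne (coeff_zero_eq_eval_zero f ▸ hsimple.1.symm)
  obtain ⟨t, ht, hbound⟩ := (splits_of_forall_aeval_eq_zero_im_eq_zero hroots).exists_mul_eval_div_le
    (fun a ha => lt_zero_of_mem_roots hcoeff h0 ha) (coeff_zero_eq_eval_zero f ▸ h0.le) (by omega)
  rw [hdeg] at hbound
  exact (mul_le_mul_of_nonneg_left (csInf_le ⟨0, hK⟩ (mem_image_of_mem _ ht)) hfactor.1).trans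
    hbound

/-- **Proposition (Gurvits' univariate bound).**
Let `f` be a real polynomial of degree `d ≥ 1` with nonnegative coefficients,
`f(1) = 1`, and all complex roots real.  With `C := inf_{t > 0} f(t)/t`, one has
`f'(0) ≥ ((d-1)/d)^{d-1} · C`. -/
theorem stmt6 (d : ℕ) (hd : 1 ≤ d) (f : Polynomial ℝ) (hdeg : f.natDegree = d)
    (hcoeff : ∀ k, 0 ≤ f.coeff k) (hone : f.eval 1 = 1)
    (hroots : ∀ z : ℂ, Polynomial.aeval z f = 0 → z.im = 0) :
    (((d : ℝ) - 1) / (d : ℝ)) ^ (d - 1) *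
        sInf ((fun t : ℝ => f.eval t / t) '' Set.Ioi 0) ≤
      (Polynomial.derivative f).eval 0 :=
  stmt6_general d f hdeg hcoeff hroots
end

section
/- Let T be a ℂ-linear map defined on the space of multi-affine complex polynomials in z_1,…,z_d with values in ℂ[z_1,…,z_d], and define its algebraic symbol G_T ∈ ℂ[z_1,…,z_d,w_1,…,w_d] by G_T(z,w) := Σ_{S ⊆ {1,…,d}} (Π_{j ∉ S} w_j) · T(Π_{j ∈ S} z_j). If G_T is a stable polynomial in the 2d variables z_1,…,z_d,w_1,…,w_d, then for every stable multi-affine polynomial f ∈ ℂ[z_1,…,z_d], the polynomial T(f) is stable or identically zero. -/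
/-!
Multiplying the symbol by `f(w)` gives a stable polynomial `G_T(z, w) f(w)` of degree at most two
in each `w_j`, and its coefficient of `w_1 ⋯ w_d` is `T f`: the term `(∏_{j ∉ S} w_j) T(z^S)`
times the term `a_{S'} w^{S'}` of `f` contributes to `w_1 ⋯ w_d` exactly when `S' = S`.
This coefficient is extracted one variable at a time, and every step preserves being stable or
zero: if `A + E t + D t²` is stable and `A, E, D` do not involve `t`, then `E` is stable or zero.
That follows from Hurwitz's theorem (a limit of stable polynomials is stable or zero), applied as
`t → 0` first to `A + E t + D t²`, so that `A` is stable or zero, and then either to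
`(E t + D t²) / t` when `A = 0`, or to `E - 2 A t`, which vanishes nowhere on the upper half space
by the Gauss–Lucas theorem applied to `u² (A - E / u + D / u²)`.
-/

open MvPolynomial Filter Metric Set Topology Function

/-- Hurwitz's theorem on a disc. -/
theorem ne_zero_of_tendstoUniformlyOn_closedBall {ι : Type*} {l : Filter ι} [l.NeBot]
    {g : ι → ℂ → ℂ} {q : ℂ → ℂ} {c : ℂ} {r : ℝ} (hr : 0 < r)
    (hg : ∀ᶠ i in l, DiffContOnCl ℂ (g i) (ball c r) ∧ ∀ t ∈ closedBall c r, g i t ≠ 0)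
    (hq : ContinuousOn q (sphere c r)) (hq₀ : ∀ t ∈ sphere c r, q t ≠ 0)
    (hgq : TendstoUniformlyOn g q l (closedBall c r)) : q c ≠ 0 := by
  obtain ⟨t₀, ht₀, hmin⟩ := (isCompact_sphere c r).exists_isMinOn
    (NormedSpace.sphere_nonempty.2 hr.le) hq.norm
  set m := ‖q t₀‖
  have hm : 0 < m := norm_pos_iff.2 (hq₀ t₀ ht₀)
  obtain ⟨i, ⟨hdiff, hne⟩, hclose⟩ :=
    (hg.and (Metric.tendstoUniformlyOn_iff.1 hgq (m / 2) (half_pos hm))).exists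
  have hc : c ∈ closedBall c r := mem_closedBall_self hr.le
  have hsphere : ∀ t ∈ sphere c r, m / 2 ≤ ‖g i t‖ := fun t ht => by
    have h₁ := isMinOn_iff.1 hmin t ht
    have h₂ := hclose t (sphere_subset_closedBall ht)
    have h₃ := norm_sub_norm_le (q t) (q t - g i t)
    rw [dist_eq_norm] at h₂
    rw [sub_sub_cancel] at h₃
    linarith
  have hinv : ‖(g i c)⁻¹‖ ≤ (m / 2)⁻¹ := by
    refine Complex.norm_le_of_forall_mem_frontier_norm_le isBounded_ball
      (hdiff.inv fun t ht => hne t (closure_ball c hr.ne' ▸ ht)) (fun t ht => ?_)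
      (closure_ball c hr.ne' ▸ hc)
    rw [frontier_ball c hr.ne'] at ht
    rw [Pi.inv_apply, norm_inv]
    exact inv_anti₀ (half_pos hm) (hsphere t ht)
  have hgc : m / 2 ≤ ‖g i c‖ := by
    rw [norm_inv] at hinv
    exact (inv_le_inv₀ (norm_pos_iff.2 (hne c hc)) (half_pos hm)).1 hinv
  have hqc := hclose c hc
  rw [dist_eq_norm] at hqc
  intro hzero
  rw [hzero, zero_sub, norm_neg] at hqc
  linarith

theorem Polynomial.eval_derivative_ne_zero_of_im_pos {p : Polynomial ℂ} (hp : 0 < p.degree)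
    (h : ∀ t : ℂ, 0 < t.im → p.eval t ≠ 0) {u : ℂ} (hu : 0 < u.im) :
    p.derivative.eval u ≠ 0 := by
  intro hu₀
  have hroots : p.rootSet ℂ ⊆ {z | z.im ≤ 0} := fun z hz =>
    not_lt.1 fun hz' => h z hz' (by simpa using (mem_rootSet.1 hz).2)
  have hconv : Convex ℝ {z : ℂ | z.im ≤ 0} := convex_halfSpace_le Complex.imLm.isLinear 0
  have hderiv : p.derivative ≠ 0 :=
    derivative_ne_zero.2 (natDegree_pos_iff_degree_pos.2 hp).ne'
  have := convexHull_min hroots hconv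
    (rootSet_derivative_subset_convexHull_rootSet hp (mem_rootSet.2 ⟨hderiv, by simpa⟩))
  exact not_lt.2 this hu

namespace MvPolynomial

variable {σ ι π : Type*}

def IsStable (P : MvPolynomial σ ℂ) : Prop :=
  ∀ x : σ → ℂ, (∀ i, 0 < (x i).im) → eval x P ≠ 0

theorem IsStable.mul {P Q : MvPolynomial σ ℂ} (hP : IsStable P) (hQ : IsStable Q) :
    IsStable (P * Q) := fun x hx => by
  rw [map_mul]
  exact mul_ne_zero (hP x hx) (hQ x hx)

theorem IsStable.rename {P : MvPolynomial σ ℂ} (hP : IsStable P) (f : σ → ι) :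
    IsStable (MvPolynomial.rename f P) := fun x hx => by
  rw [eval_rename]
  exact hP _ fun i => hx (f i)

theorem IsStable.of_rename {P : MvPolynomial σ ℂ} {f : σ → ι} (hf : Injective f)
    (hP : IsStable (MvPolynomial.rename f P)) : IsStable P := fun x hx => by
  have := hP (extend f x fun _ => Complex.I) fun i => by
    by_cases hi : ∃ a, f a = i
    · obtain ⟨a, rfl⟩ := hi
      rw [hf.extend_apply]
      exact hx a
    · simp [extend_apply' _ _ _ hi]
  rwa [eval_rename, extend_comp hf] at this

theorem analyticAt_eval_add_smul (P : MvPolynomial σ ℂ) (x u : σ → ℂ) (t : ℂ) :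
    AnalyticAt ℂ (fun t : ℂ => eval (x + t • u) P) t :=
  AnalyticAt.aeval_mvPolynomial (f := fun t : ℂ => x + t • u)
    (fun i => by simp only [Pi.add_apply, Pi.smul_apply, smul_eq_mul]; fun_prop) P

/-- Hurwitz's theorem for stable polynomials: restricted to the complex line through a zero `x₀`
of `F 0` and a point where `F 0` does not vanish, the disc version applies. -/
theorem isStable_or_eq_zero_of_continuous [Finite σ] {F : ℂ → MvPolynomial σ ℂ}
    (hF : Continuous fun p : ℂ × (σ → ℂ) => eval p.2 (F p.1))
    (hstable : ∀ s : ℂ, 0 < s.im → IsStable (F s)) : IsStable (F 0) ∨ F 0 = 0 := by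
  refine or_iff_not_imp_right.2 fun hne x₀ hx₀ hzero => ?_
  obtain ⟨ξ, hξ⟩ : ∃ ξ, eval ξ (F 0) ≠ 0 := by
    by_contra! h
    exact hne (MvPolynomial.funext fun x => by simpa using h x)
  set L : ℂ → σ → ℂ := fun t => x₀ + t • (ξ - x₀)
  have hL : Continuous L := by fun_prop
  have hisol : ∀ᶠ t in 𝓝[≠] 0, eval (L t) (F 0) ≠ 0 := by
    refine ((analyticAt_eval_add_smul (F 0) x₀ (ξ - x₀) 0).eventually_eq_zero_or_eventually_ne_zero
      ).resolve_left fun h => hξ ?_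
    have hq : AnalyticOnNhd ℂ (fun t : ℂ => eval (L t) (F 0)) univ :=
      fun t _ => analyticAt_eval_add_smul (F 0) x₀ (ξ - x₀) t
    simpa [L] using
      hq.eqOn_zero_of_preconnected_of_eventuallyEq_zero isPreconnected_univ (mem_univ 0) h
        (mem_univ 1)
  have hup : ∀ᶠ t in 𝓝 (0 : ℂ), ∀ i, 0 < (L t i).im :=
    eventually_all.2 fun i => ((Complex.continuous_im.comp ((continuous_apply i).comp hL)).tendsto
      0).eventually (eventually_gt_nhds (by simpa [L] using hx₀ i))
  obtain ⟨ε, hε, hball⟩ :=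
    Metric.eventually_nhds_iff_ball.1 (hup.and (eventually_nhdsWithin_iff.1 hisol))
  have hr : 0 < ε / 2 := half_pos hε
  have hsub : closedBall (0 : ℂ) (ε / 2) ⊆ ball 0 ε := closedBall_subset_ball (half_lt_self hε)
  have hunif : TendstoUniformlyOn (fun s t => eval (L t) (F s)) (fun t => eval (L t) (F 0))
      (𝓝[{s | 0 < s.im}] 0) (closedBall 0 (ε / 2)) := by
    refine Metric.tendstoUniformlyOn_iff.2 fun δ hδ => ?_
    obtain ⟨v, hv, hvδ⟩ := (isCompact_closedBall (0 : ℂ) (ε / 2)).mem_uniformity_of_prod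
      (f := fun s t => eval (L t) (F s))
      (hF.comp (continuous_fst.prodMk (hL.comp continuous_snd))).continuousOn (mem_univ 0)
      (dist_mem_uniformity hδ)
    rw [nhdsWithin_univ] at hv
    filter_upwards [nhdsWithin_le_nhds hv] with s hs t ht
    rw [dist_comm]
    exact hvδ s hs t ht
  have : (𝓝[{s : ℂ | 0 < s.im}] 0).NeBot := mem_closure_iff_nhdsWithin_neBot.1 (by simp)
  refine ne_zero_of_tendstoUniformlyOn_closedBall hr ?_ ?_ (fun t ht => ?_) hunif
    (by simpa [L] using hzero)
  · filter_upwards [self_mem_nhdsWithin] with s hs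
    exact ⟨Differentiable.diffContOnCl fun t => (analyticAt_eval_add_smul _ _ _ t).differentiableAt,
      fun t ht => hstable s hs _ (hball t (hsub ht)).1⟩
  · exact (hF.comp (continuous_const.prodMk hL)).continuousOn
  · refine (hball t (hsub (sphere_subset_closedBall ht))).2 ?_
    rintro rfl
    simp [hr.ne] at ht

attribute [local fun_prop] continuous_eval

theorem isStable_or_eq_zero_of_quadratic [Finite σ] {A E D : MvPolynomial σ ℂ}
    (h : ∀ x : σ → ℂ, (∀ i, 0 < (x i).im) → ∀ t : ℂ, 0 < t.im →
      eval x A + eval x E * t + eval x D * t ^ 2 ≠ 0) :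
    IsStable E ∨ E = 0 := by
  have hA : IsStable A ∨ A = 0 := by
    simpa using isStable_or_eq_zero_of_continuous (F := fun s => A + s • (E + s • D))
      (by simp only [map_add, smul_eval]; fun_prop)
      (fun s hs x hx hA => h x hx s hs (by
        simp only [map_add, smul_eval] at hA
        linear_combination hA))
  rcases hA with hA | rfl
  · simpa using isStable_or_eq_zero_of_continuous (F := fun s => E - (2 * s) • A)
      (by simp only [map_sub, smul_eval]; fun_prop)
      (fun s hs x hx => by
        set p : Polynomial ℂ := .C (eval x A) * .X ^ 2 + .C (-eval x E) * .X + .C (eval x D)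
        have hp : 0 < p.degree := by rw [Polynomial.degree_quadratic (hA x hx)]; norm_num
        have hroot : ∀ u : ℂ, 0 < u.im → p.eval u ≠ 0 := fun u hu => by
          have hu₀ : u ≠ 0 := by rintro rfl; simp at hu
          have hinv : 0 < (-u⁻¹).im := by
            simpa [neg_div] using div_pos hu (Complex.normSq_pos.2 hu₀)
          convert mul_ne_zero (pow_ne_zero 2 hu₀) (h x hx _ hinv) using 1
          simp only [p, Polynomial.eval_add, Polynomial.eval_C_mul, Polynomial.eval_pow,
            Polynomial.eval_X, Polynomial.eval_C]
          field_simp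
        have hderiv : p.derivative.eval s = -eval x (E - (2 * s) • A) := by
          simp only [p, Polynomial.derivative_add, Polynomial.derivative_C_mul_X_pow,
            Polynomial.derivative_C_mul_X, Polynomial.derivative_C, Polynomial.eval_add,
            Polynomial.eval_C_mul, Polynomial.eval_pow, Polynomial.eval_X, Polynomial.eval_C,
            Polynomial.eval_zero, map_sub, smul_eval]
          ring
        rw [← neg_ne_zero, ← hderiv]
        exact p.eval_derivative_ne_zero_of_im_pos hp hroot hs)
  · simpa using isStable_or_eq_zero_of_continuous (F := fun s => E + s • D)
      (by simp only [map_add, smul_eval]; fun_prop)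
      (fun s hs x hx hEs => h x hx s hs (by
        simp only [smul_eval, map_add] at hEs
        simp only [map_zero]
        linear_combination s * hEs))

section partialCoeff

variable [DecidableEq ι] [Fintype ι]

/-- The coefficient of `∏ j ∈ K, w j ^ m j` in `∑ p ∈ P, e p (z) * ∏ j, w j ^ n p j`, as a
polynomial in `z` (the variables `Sum.inl`) and the `w j` with `j ∉ K` (the variables `Sum.inr`). -/
noncomputable def partialCoeff (P : Finset π) (e : π → MvPolynomial σ ℂ) (n : π → ι → ℕ)
    (K : Finset ι) (m : ι → ℕ) : MvPolynomial (σ ⊕ ι) ℂ :=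
  ∑ p ∈ P with ∀ j ∈ K, n p j = m j, rename Sum.inl (e p) * ∏ j ∈ Kᶜ, X (Sum.inr j) ^ n p j

variable (P : Finset π) (e : π → MvPolynomial σ ℂ) (n : π → ι → ℕ)

theorem eval_partialCoeff (K : Finset ι) (m : ι → ℕ) (x : σ ⊕ ι → ℂ) :
    eval x (partialCoeff P e n K m) = ∑ p ∈ P with ∀ j ∈ K, n p j = m j,
      eval (x ∘ Sum.inl) (e p) * ∏ j ∈ Kᶜ, x (Sum.inr j) ^ n p j := by
  simp [partialCoeff, eval_rename]

theorem eval_update_partialCoeff [DecidableEq σ] {K : Finset ι} {j : ι} (hj : j ∉ K)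
    (m : ι → ℕ) {N : ℕ} (hn : ∀ p ∈ P, n p j ≤ N) (x : σ ⊕ ι → ℂ) (t : ℂ) :
    eval (update x (Sum.inr j) t) (partialCoeff P e n K m) = ∑ k ∈ Finset.range (N + 1),
      eval x (partialCoeff P e n (insert j K) (update m j k)) * t ^ k := by
  set G : π → ℂ := fun p =>
    eval (x ∘ Sum.inl) (e p) * ∏ i ∈ (insert j K)ᶜ, x (Sum.inr i) ^ n p i
  have hterm : ∀ p, eval (update x (Sum.inr j) t ∘ Sum.inl) (e p) *
      ∏ i ∈ Kᶜ, update x (Sum.inr j) t (Sum.inr i) ^ n p i = G p * t ^ n p j := fun p => by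
    rw [update_comp_eq_of_forall_ne _ _ fun _ => Sum.inl_ne_inr,
      ← Finset.mul_prod_erase _ _ (Finset.mem_compl.2 hj), update_self,
      Finset.prod_congr rfl fun i hi => by
        rw [update_of_ne (Sum.inr_injective.ne (Finset.ne_of_mem_erase hi))]]
    simp only [G, Finset.compl_insert]
    ring
  have hfilter : ∀ k : ℕ, {p ∈ P | ∀ i ∈ insert j K, n p i = update m j k i} =
      {p ∈ {p ∈ P | ∀ i ∈ K, n p i = m i} | n p j = k} := fun k => by
    rw [Finset.filter_filter]
    refine Finset.filter_congr fun p _ => ?_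
    simp only [Finset.forall_mem_insert, update_self]
    rw [and_comm]
    refine and_congr_left' (forall₂_congr fun i hi => ?_)
    rw [update_of_ne (ne_of_mem_of_not_mem hi hj)]
  simp_rw [eval_partialCoeff, hterm, hfilter, Finset.sum_mul]
  rw [← Finset.sum_fiberwise_of_maps_to (g := fun p => n p j) (t := Finset.range (N + 1))
    fun p hp => Finset.mem_range_succ_iff.2 (hn p (Finset.mem_filter.1 hp).1)]
  refine Finset.sum_congr rfl fun k _ => Finset.sum_congr rfl fun p hp => ?_
  rw [(Finset.mem_filter.1 hp).2]

theorem isStable_or_eq_zero_partialCoeff_insert [Finite σ] (hn : ∀ p ∈ P, ∀ j, n p j ≤ 2)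
    {K : Finset ι} {j : ι} (hj : j ∉ K)
    (h : IsStable (partialCoeff P e n K 1) ∨ partialCoeff P e n K 1 = 0) :
    IsStable (partialCoeff P e n (insert j K) 1) ∨ partialCoeff P e n (insert j K) 1 = 0 := by
  classical
  set E := partialCoeff P e n (insert j K) 1
  set A := partialCoeff P e n (insert j K) (update 1 j 0)
  set D := partialCoeff P e n (insert j K) (update 1 j 2)
  have hexp : ∀ x t, eval (update x (Sum.inr j) t) (partialCoeff P e n K 1) =
      eval x A + eval x E * t + eval x D * t ^ 2 := fun x t => by
    rw [eval_update_partialCoeff P e n hj 1 fun p hp => hn p hp j]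
    simp [Finset.sum_range_succ, A, D, E]
  rcases h with h | h
  · refine isStable_or_eq_zero_of_quadratic (A := A) (D := D) fun x hx t ht => ?_
    rw [← hexp]
    refine h _ fun i => ?_
    rcases eq_or_ne i (Sum.inr j) with rfl | hi
    · simpa using ht
    · simpa [update_of_ne hi] using hx i
  · refine Or.inr (MvPolynomial.funext fun x => ?_)
    have h₁ := hexp x 1
    have h₂ := hexp x (-1)
    rw [h, map_zero] at h₁ h₂
    rw [map_zero]
    linear_combination (h₂ - h₁) / 2

theorem isStable_or_eq_zero_partialCoeff [Finite σ] (hn : ∀ p ∈ P, ∀ j, n p j ≤ 2)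
    (h : IsStable (partialCoeff P e n ∅ 1)) (K : Finset ι) :
    IsStable (partialCoeff P e n K 1) ∨ partialCoeff P e n K 1 = 0 := by
  induction K using Finset.induction_on with
  | empty => exact Or.inl h
  | insert j K hj ih => exact isStable_or_eq_zero_partialCoeff_insert P e n hn hj ih

theorem isStable_or_eq_zero_sum_filter [Finite σ] (hn : ∀ p ∈ P, ∀ j, n p j ≤ 2)
    (h : IsStable (∑ p ∈ P, rename Sum.inl (e p) * ∏ j, X (Sum.inr j) ^ n p j)) :
    IsStable (∑ p ∈ P with ∀ j, n p j = 1, e p) ∨ ∑ p ∈ P with ∀ j, n p j = 1, e p = 0 := by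
  have h₀ : partialCoeff P e n ∅ 1 =
      ∑ p ∈ P, rename Sum.inl (e p) * ∏ j, X (Sum.inr j) ^ n p j := by
    simp [partialCoeff]
  have h₁ : partialCoeff P e n Finset.univ 1 =
      rename Sum.inl (∑ p ∈ P with ∀ j, n p j = 1, e p) := by
    simp [partialCoeff]
  have := isStable_or_eq_zero_partialCoeff P e n hn (h₀ ▸ h) Finset.univ
  rw [h₁] at this
  exact this.imp (IsStable.of_rename Sum.inl_injective)
    fun h => rename_injective _ Sum.inl_injective (by rw [h, map_zero])

end partialCoeff

section symbol

variable [Fintype σ] [DecidableEq σ]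

noncomputable def symbol (T : MvPolynomial σ ℂ →ₗ[ℂ] MvPolynomial σ ℂ) :
    MvPolynomial (σ ⊕ σ) ℂ :=
  ∑ S : Finset σ, (∏ j ∈ Sᶜ, X (Sum.inr j)) * rename Sum.inl (T (∏ j ∈ S, X j))

theorem symbol_mul_rename_inr (T : MvPolynomial σ ℂ →ₗ[ℂ] MvPolynomial σ ℂ)
    (f : MvPolynomial σ ℂ) :
    symbol T * rename Sum.inr f = ∑ p ∈ Finset.univ ×ˢ f.support,
      rename Sum.inl (coeff p.2 f • T (∏ j ∈ p.1, X j)) *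
        ∏ j, X (Sum.inr j) ^ ((if j ∈ p.1 then 0 else 1) + p.2 j) := by
  have hf : (rename Sum.inr f : MvPolynomial (σ ⊕ σ) ℂ) =
      ∑ μ ∈ f.support, C (coeff μ f) * ∏ j, X (Sum.inr j) ^ μ j := by
    conv_lhs => rw [f.as_sum]
    simp [monomial_eq, Finsupp.prod_fintype]
  rw [symbol, hf, Finset.sum_mul_sum, Finset.sum_product]
  refine Finset.sum_congr rfl fun S _ => Finset.sum_congr rfl fun μ _ => ?_
  simp only [pow_add, Finset.prod_mul_distrib, pow_ite, pow_zero, pow_one, Finset.prod_ite,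
    Finset.prod_const_one, one_mul, Finset.filter_not, ← Finset.compl_eq_univ_sdiff,
    Finset.filter_mem_eq_inter, Finset.univ_inter, smul_eq_C_mul, map_mul, rename_C]
  ring

theorem apply_eq_sum_filter (T : MvPolynomial σ ℂ →ₗ[ℂ] MvPolynomial σ ℂ)
    {f : MvPolynomial σ ℂ} (hf : ∀ i, f.degreeOf i ≤ 1) :
    T f = ∑ p ∈ Finset.univ ×ˢ f.support with ∀ j, (if j ∈ p.1 then 0 else 1) + p.2 j = 1,
      coeff p.2 f • T (∏ j ∈ p.1, X j) := by
  have hle : ∀ μ ∈ f.support, ∀ j, μ j ≤ 1 := fun μ hμ j =>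
    (monomial_le_degreeOf j hμ).trans (hf j)
  have hcompat : ∀ μ ∈ f.support, ∀ S : Finset σ,
      (∀ j, (if j ∈ S then 0 else 1) + μ j = 1) ↔ μ.support = S := fun μ hμ S => by
    rw [Finset.ext_iff]
    refine forall_congr' fun j => ?_
    have := hle μ hμ j
    rw [Finsupp.mem_support_iff]
    split_ifs with h <;> simp only [h, iff_true, iff_false] <;> omega
  have hmonomial : ∀ μ ∈ f.support, ∏ j ∈ μ.support, X j = (monomial μ 1 : MvPolynomial σ ℂ) :=
    fun μ hμ => by
      rw [monomial_eq, C_1, one_mul, Finsupp.prod]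
      refine Finset.prod_congr rfl fun j hj => ?_
      rw [le_antisymm (hle μ hμ j) (Nat.one_le_iff_ne_zero.2 (Finsupp.mem_support_iff.1 hj)),
        pow_one]
  rw [Finset.sum_filter, Finset.sum_product_right]
  conv_lhs => rw [f.as_sum, map_sum]
  refine Finset.sum_congr rfl fun μ hμ => ?_
  simp_rw [hcompat μ hμ]
  rw [Finset.sum_ite_eq Finset.univ μ.support, if_pos (Finset.mem_univ _), hmonomial μ hμ,
    ← map_smul, smul_monomial, smul_eq_mul, mul_one]

theorem isStable_or_eq_zero_apply_of_isStable_symbol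
    {T : MvPolynomial σ ℂ →ₗ[ℂ] MvPolynomial σ ℂ} (hT : IsStable (symbol T))
    {f : MvPolynomial σ ℂ} (hdeg : ∀ i, f.degreeOf i ≤ 1) (hf : IsStable f) :
    IsStable (T f) ∨ T f = 0 := by
  rw [apply_eq_sum_filter T hdeg]
  refine isStable_or_eq_zero_sum_filter _ _ _ (fun p hp j => ?_) ?_
  · have := (monomial_le_degreeOf j (Finset.mem_product.1 hp).2).trans (hdeg j)
    split_ifs <;> omega
  · rw [← symbol_mul_rename_inr]
    exact hT.mul (hf.rename _)

end symbol

end MvPolynomial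

/-- **Theorem (Borcea–Brändén, sufficiency: stability of the algebraic symbol).**
Let `T` be a `ℂ`-linear map on polynomials in `z_1,…,z_d` (only its action on
multi-affine polynomials matters), and let its algebraic symbol be
`G_T(z,w) = ∑_{S ⊆ {1,…,d}} (∏_{j ∉ S} w_j) · T(∏_{j ∈ S} z_j)`, a polynomial in the
`2d` variables `z, w`.  If `G_T` is stable, then for every stable multi-affine
`f ∈ ℂ[z_1,…,z_d]`, the polynomial `T(f)` is stable or identically zero. -/
theorem stmt14 (d : ℕ)
    (T : MvPolynomial (Fin d) ℂ →ₗ[ℂ] MvPolynomial (Fin d) ℂ)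
    (hGT : ∀ z : Fin d ⊕ Fin d → ℂ, (∀ j, 0 < (z j).im) →
      MvPolynomial.eval z
        (∑ S : Finset (Fin d),
          (∏ j ∈ Sᶜ, MvPolynomial.X (Sum.inr j)) *
            MvPolynomial.rename Sum.inl (T (∏ j ∈ S, MvPolynomial.X j))
          : MvPolynomial (Fin d ⊕ Fin d) ℂ) ≠ 0) :
    ∀ f : MvPolynomial (Fin d) ℂ, (∀ i, f.degreeOf i ≤ 1) →
      (∀ z : Fin d → ℂ, (∀ j, 0 < (z j).im) → MvPolynomial.eval z f ≠ 0) →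
      ((∀ z : Fin d → ℂ, (∀ j, 0 < (z j).im) → MvPolynomial.eval z (T f) ≠ 0) ∨
        T f = 0) :=
  fun _ hdeg hf => MvPolynomial.isStable_or_eq_zero_apply_of_isStable_symbol hGT hdeg hf
end
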